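/- arXiv:2506.15360 — 2 statements merged into one kernel-verified Lean document; each statement's English description precedes it below -/
import Mathlib

section
/- For every index p ∈ {1,…,d}, E[ (uᵀAu · u_p)² ] = (tr(A))² + 4·A_{p,p}·tr(A) + 2·Σ_{i=1}^d A_{i,i}² + 8·A_{p,p}² + Σ_{i>j} (A_{i,j} + A_{j,i})² + 2·Σ_{i : i>p} (A_{i,p} + A_{p,i})² + 2·Σ_{j : j<p} (A_{p,j} + A_{j,p})², where Σ_{i>j} ranges over all pairs (i,j) with 1 ≤ j < i ≤ d. -/
open MeasureTheory ProbabilityTheory Finset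

noncomputable def stdGaussianVec (d : ℕ) : Measure (Fin d → ℝ) :=
  Measure.pi fun _ => gaussianReal 0 1

def quadForm {d : ℕ} (A : Matrix (Fin d) (Fin d) ℝ) (u : Fin d → ℝ) : ℝ :=
  ∑ i, ∑ j, A i j * u i * u j

/-!
Expanding the square writes `(uᵀAu · u_p)²` as `∑ A_ij A_kl u_i u_j u_k u_l u_p²`. Gaussian
integration by parts, `E[u_i M] = ∑ E[M without one factor u_i]` (the sum running over the factors
of the monomial `M` equal to `u_i`), evaluates every such sixth moment as a sum over pairings
(Isserlis–Wick). Summing the pairings against `A_ij A_kl` gives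
`(tr A)² + 4 A_pp tr A + ∑_{i,j} A_ij (A_ij + A_ji) + 2 ∑_i (A_ip + A_pi)²`,
and splitting the last two sums at the diagonal and at `p` gives the stated form.
-/

open scoped NNReal

theorem List.prod_map_eq_prod_pow_count {ι M : Type*} [Fintype ι] [DecidableEq ι] [CommMonoid M]
    (L : List ι) (f : ι → M) : (L.map f).prod = ∏ m, f m ^ L.count m := by
  rw [Finset.prod_list_map_count]
  exact Finset.prod_subset (Finset.subset_univ _) fun m _ hm => by
    rw [List.count_eq_zero_of_not_mem (by simpa using hm), pow_zero]

theorem List.sum_range_ite_getElem?_eq_count_nsmul {α M : Type*} [DecidableEq α]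
    [AddCommMonoid M] (F : List α → M) (hF : ∀ {L₁ L₂ : List α}, L₁.Perm L₂ → F L₁ = F L₂)
    (i : α) (L : List α) :
    ∑ s ∈ Finset.range L.length, (if L[s]? = some i then F (L.eraseIdx s) else 0)
      = L.count i • F (L.erase i) := by
  induction L generalizing F with
  | nil => simp
  | cons a L ih =>
    simp only [List.length_cons, Finset.sum_range_succ', List.getElem?_cons_succ,
      List.eraseIdx_cons_succ, List.getElem?_cons_zero, List.eraseIdx_cons_zero, Option.some.injEq,
      ih (fun L' => F (a :: L')) fun h => hF (h.cons a)]
    by_cases hai : a = i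
    · subst hai
      simp only [↓reduceIte, List.count_cons_self, List.erase_cons_head, succ_nsmul]
      congr 1
      by_cases ha : a ∈ L
      · rw [hF (List.perm_cons_erase ha).symm]
      · rw [List.count_eq_zero_of_not_mem ha, zero_nsmul, zero_nsmul]
    · simp only [hai, ↓reduceIte, add_zero, List.count_cons_of_ne hai,
        List.erase_cons_tail (a := i) (b := a) (by simpa using hai)]

theorem Fintype.sum_eq_add_sum_lt_add_sum_gt {ι M : Type*} [Fintype ι] [LinearOrder ι]
    [AddCommMonoid M] (f : ι → M) (a : ι) :
    ∑ i, f i = f a + ∑ i with i < a, f i + ∑ i with a < i, f i := by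
  have hsplit (i : ι) : f i
      = (if a = i then f i else 0) + (if i < a then f i else 0) + (if a < i then f i else 0) := by
    rcases lt_trichotomy i a with h | rfl | h
    · simp [h, h.ne', h.not_gt]
    · simp
    · simp [h, h.ne, h.not_gt]
  rw [Fintype.sum_congr _ _ hsplit, sum_add_distrib, sum_add_distrib, Fintype.sum_ite_eq, sum_filter, sum_filter]

theorem Fintype.sum_sum_eq_sum_diag_add_sum_lt {ι M : Type*} [Fintype ι] [LinearOrder ι]
    [AddCommMonoid M] (f : ι → ι → M) :
    ∑ i, ∑ j, f i j = ∑ i, f i i + ∑ i, ∑ j with j < i, (f i j + f j i) := by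
  have hupper : ∑ i, ∑ j with i < j, f i j = ∑ i, ∑ j with j < i, f j i :=
    sum_comm' fun i j => by simp
  simp only [fun i => Fintype.sum_eq_add_sum_lt_add_sum_gt (f i) i, sum_add_distrib, hupper]
  abel

namespace ProbabilityTheory

lemma hasDerivAt_gaussianPDFReal (μ : ℝ) (v : ℝ≥0) (x : ℝ) :
    HasDerivAt (gaussianPDFReal μ v) (-((x - μ) / v) * gaussianPDFReal μ v x) x := by
  have h : HasDerivAt (fun y => -(y - μ) ^ 2 / (2 * v)) (-((x - μ) / v)) x := by
    refine ((((hasDerivAt_id x).sub_const μ).pow 2).neg.div_const (2 * (v : ℝ))).congr_deriv ?_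
    simp only [id, Nat.cast_ofNat, Nat.add_one_sub_one, pow_one, mul_one]
    by_cases hv : (v : ℝ) = 0
    · simp [hv]
    · field_simp
  rw [gaussianPDFReal_def]
  exact (h.exp.const_mul _).congr_deriv (by ring)

lemma integrable_pow_gaussianReal (μ : ℝ) (v : ℝ≥0) (n : ℕ) :
    Integrable (fun x => x ^ n) (gaussianReal μ v) :=
  integrable_pow_of_mem_interior_integrableExpSet (by simp) n

lemma integral_pow_add_two_gaussianReal (v : ℝ≥0) (n : ℕ) :
    ∫ x, x ^ (n + 2) ∂gaussianReal 0 v = (n + 1) * v * ∫ x, x ^ n ∂gaussianReal 0 v := by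
  rcases eq_or_ne v 0 with rfl | hv
  · simp [gaussianReal_zero_var]
  have hint (k : ℕ) : Integrable (fun x => gaussianPDFReal 0 v x * x ^ k) := by
    have := integrable_pow_gaussianReal 0 v k
    rw [gaussianReal_of_var_ne_zero 0 hv, gaussianPDF_def,
      integrable_withDensity_iff_integrable_smul' (by fun_prop) (by simp)] at this
    simpa [ENNReal.toReal_ofReal (gaussianPDFReal_nonneg _ _ _)] using this
  have hderiv (x : ℝ) : HasDerivAt (fun y => gaussianPDFReal 0 v y * y ^ (n + 1))
      ((n + 1) * (gaussianPDFReal 0 v x * x ^ n)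
        - (v : ℝ)⁻¹ * (gaussianPDFReal 0 v x * x ^ (n + 2))) x :=
    ((hasDerivAt_gaussianPDFReal 0 v x).mul (hasDerivAt_pow (n + 1) x)).congr_deriv
      (by push_cast; ring)
  have h0 := integral_eq_zero_of_hasDerivAt_of_integrable hderiv
    (((hint n).const_mul _).sub ((hint (n + 2)).const_mul _)) (hint (n + 1))
  simp only [integral_gaussianReal_eq_integral_smul hv, smul_eq_mul]
  rw [integral_sub ((hint n).const_mul _) ((hint (n + 2)).const_mul _), integral_const_mul,
    integral_const_mul, sub_eq_zero] at h0
  have hv' : (v : ℝ) ≠ 0 := by exact_mod_cast hv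
  field_simp at h0
  linarith

lemma integral_pow_succ_gaussianReal (v : ℝ≥0) (n : ℕ) :
    ∫ x, x ^ (n + 1) ∂gaussianReal 0 v = n * v * ∫ x, x ^ (n - 1) ∂gaussianReal 0 v := by
  cases n with
  | zero => simp
  | succ n => simpa using integral_pow_add_two_gaussianReal v n

section Isserlis

variable {ι : Type*} [Fintype ι] (v : ℝ≥0)

lemma integrable_prod_map_pi_gaussianReal (L : List ι) :
    Integrable (fun u => (L.map u).prod) (Measure.pi fun _ : ι => gaussianReal 0 v) := by
  classical
  simp_rw [List.prod_map_eq_prod_pow_count]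
  exact Integrable.fintype_prod fun m => integrable_pow_gaussianReal 0 v _

lemma integral_prod_map_pi_gaussianReal [DecidableEq ι] (L : List ι) :
    ∫ u, (L.map u).prod ∂Measure.pi (fun _ : ι => gaussianReal 0 v)
      = ∏ m, ∫ x, x ^ L.count m ∂gaussianReal 0 v := by
  simp_rw [List.prod_map_eq_prod_pow_count]
  exact integral_fintype_prod_eq_prod fun m x => x ^ L.count m

lemma integral_cons_prod_map_pi_gaussianReal [DecidableEq ι] (i : ι) (L : List ι) :
    ∫ u, ((i :: L).map u).prod ∂Measure.pi (fun _ : ι => gaussianReal 0 v)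
      = L.count i * v
        * ∫ u, ((L.erase i).map u).prod ∂Measure.pi (fun _ : ι => gaussianReal 0 v) := by
  simp only [integral_prod_map_pi_gaussianReal, ← Finset.mul_prod_erase _ _ (Finset.mem_univ i),
    List.count_cons_self, List.count_erase_self, integral_pow_succ_gaussianReal, mul_assoc]
  congr 3
  refine Finset.prod_congr rfl fun m hm => ?_
  have him : i ≠ m := (Finset.ne_of_mem_erase hm).symm
  rw [List.count_cons_of_ne him, List.count_erase_of_ne him.symm]

theorem integral_cons_prod_map_pi_gaussianReal_eq_sum_eraseIdx [DecidableEq ι]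
    (i : ι) (L : List ι) :
    ∫ u, ((i :: L).map u).prod ∂Measure.pi (fun _ : ι => gaussianReal 0 v)
      = v * ∑ s ∈ Finset.range L.length, if L[s]? = some i then
          ∫ u, ((L.eraseIdx s).map u).prod ∂Measure.pi (fun _ : ι => gaussianReal 0 v) else 0 := by
  rw [List.sum_range_ite_getElem?_eq_count_nsmul
      (fun L' => ∫ u, (L'.map u).prod ∂Measure.pi fun _ : ι => gaussianReal 0 v)
      (fun h => by simp_rw [(h.map _).prod_eq]),
    integral_cons_prod_map_pi_gaussianReal, nsmul_eq_mul]
  ring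

end Isserlis

end ProbabilityTheory

lemma quadForm_mul_sq_eq_sum {d : ℕ} (A : Matrix (Fin d) (Fin d) ℝ) (u : Fin d → ℝ) (p : Fin d) :
    (quadForm A u * u p) ^ 2
      = ∑ i, ∑ j, ∑ k, ∑ l, A i j * A k l * ([i, j, k, l, p, p].map u).prod := by
  simp only [quadForm, sq, sum_mul, mul_sum]
  refine sum_congr rfl fun i _ => sum_congr rfl fun j _ =>
    sum_congr rfl fun k _ => sum_congr rfl fun l _ => ?_
  simp only [List.map_cons, List.map_nil, List.prod_cons, List.prod_nil]
  ring

lemma integral_quadForm_mul_sq {d : ℕ} (A : Matrix (Fin d) (Fin d) ℝ) (p : Fin d) :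
    ∫ u, (quadForm A u * u p) ^ 2 ∂stdGaussianVec d
      = (∑ i, A i i) ^ 2 + 4 * A p p * ∑ i, A i i + ∑ i, ∑ j, A i j * (A i j + A j i)
        + 2 * ∑ i, (A i p + A p i) ^ 2 := by
  have hint (i j k l : Fin d) :=
    (integrable_prod_map_pi_gaussianReal 1 [i, j, k, l, p, p]).const_mul (A i j * A k l)
  simp_rw [quadForm_mul_sq_eq_sum]
  simp (disch := fun_prop) only [stdGaussianVec, integral_finsetSum, integral_const_mul]
  -- each sixth moment becomes its 15 pairings, a sum of products of Kronecker deltas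
  simp only [integral_cons_prod_map_pi_gaussianReal_eq_sum_eraseIdx, List.length_cons,
    List.length_nil, Finset.sum_range_succ, Finset.sum_range_zero, List.getElem?_cons_zero,
    List.getElem?_cons_succ, Option.some.injEq, List.eraseIdx_cons_zero, List.eraseIdx_cons_succ,
    List.map_nil, List.prod_nil, integral_const, probReal_univ, smul_eq_mul, NNReal.coe_one,
    one_mul, mul_one, zero_add, ↓reduceIte]
  simp only [mul_add, mul_ite, mul_one, mul_zero, sum_add_distrib, sum_ite_eq, sum_ite_eq',
    mem_univ, if_true, sum_ite_irrel, sum_const_zero]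
  have hcomm : ∑ i, A p i * A i p = ∑ i, A i p * A p i := sum_congr rfl fun _ _ => mul_comm _ _
  simp only [add_sq, mul_assoc, sum_add_distrib]
  simp only [← sum_mul, ← mul_sum, hcomm, sq]
  ring

theorem second_moment_quadForm_up_general {d : ℕ}
    (A : Matrix (Fin d) (Fin d) ℝ) (p : Fin d) :
    ∫ u, (quadForm A u * u p) ^ 2 ∂(stdGaussianVec d)
      = (∑ i, A i i) ^ 2 + 4 * A p p * (∑ i, A i i)
        + 2 * (∑ i, (A i i) ^ 2) + 8 * (A p p) ^ 2
        + (∑ i, ∑ j ∈ Finset.univ.filter (fun j => j < i), (A i j + A j i) ^ 2)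
        + 2 * (∑ i ∈ Finset.univ.filter (fun i => p < i), (A i p + A p i) ^ 2)
        + 2 * (∑ j ∈ Finset.univ.filter (fun j => j < p), (A p j + A j p) ^ 2) := by
  have hsym : ∑ i, ∑ j, A i j * (A i j + A j i)
      = 2 * ∑ i, A i i ^ 2 + ∑ i, ∑ j with j < i, (A i j + A j i) ^ 2 := by
    rw [Fintype.sum_sum_eq_sum_diag_add_sum_lt, mul_sum]
    congr 1
    · exact sum_congr rfl fun _ _ => by ring
    · exact sum_congr rfl fun _ _ => sum_congr rfl fun _ _ => by ring
  have hcol : ∑ i, (A i p + A p i) ^ 2 = 4 * A p p ^ 2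
      + ∑ j with j < p, (A p j + A j p) ^ 2 + ∑ i with p < i, (A i p + A p i) ^ 2 := by
    rw [Fintype.sum_eq_add_sum_lt_add_sum_gt _ p]
    congr 2
    · ring
    · exact sum_congr rfl fun _ _ => by ring
  rw [integral_quadForm_mul_sq, hsym, hcol]
  ring

theorem second_moment_quadForm_up {d : ℕ} (hd : 1 ≤ d)
    (A : Matrix (Fin d) (Fin d) ℝ) (p : Fin d) :
    ∫ u, (quadForm A u * u p) ^ 2 ∂(stdGaussianVec d)
      = (∑ i, A i i) ^ 2 + 4 * A p p * (∑ i, A i i)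
        + 2 * (∑ i, (A i i) ^ 2) + 8 * (A p p) ^ 2
        + (∑ i, ∑ j ∈ Finset.univ.filter (fun j => j < i), (A i j + A j i) ^ 2)
        + 2 * (∑ i ∈ Finset.univ.filter (fun i => p < i), (A i p + A p i) ^ 2)
        + 2 * (∑ j ∈ Finset.univ.filter (fun j => j < p), (A p j + A j p) ^ 2) :=
  second_moment_quadForm_up_general A p
end

section
/- For every index p ∈ {1,…,d}, the off-diagonal part with one extra factor u_p satisfies E[ (Σ_{i≠j} A_{i,j} u_i u_j u_p)² ] = Σ_{i>j} (A_{i,j} + A_{j,i})² + 2·Σ_{i : i>p} (A_{i,p} + A_{p,i})² + 2·Σ_{j : j<p} (A_{p,j} + A_{j,p})², where Σ_{i≠j} ranges over ordered pairs (i,j) with i ≠ j and Σ_{i>j} over pairs with 1 ≤ j < i ≤ d. -/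
open MeasureTheory ProbabilityTheory Finset

/-!
Regrouping the ordered pairs, the sum is `∑_{j<i} (A i j + A j i) u_i u_j u_p`. The cubic
monomials `u_i u_j u_p` with `j < i` are orthogonal in `L²` of the Gaussian measure: the product
of two distinct ones contains some coordinate to an odd power, and odd Gaussian moments vanish.
Hence the second moment is `∑_{j<i} (A i j + A j i)² E[u_i² u_j² u_p²]`, and that expectation
is `E[u⁴] = 3` when `p ∈ {i, j}` and `E[u²]³ = 1` otherwise.
-/

open Real

theorem integral_sq_sum_eq_of_orthogonal {α ι : Type*} [MeasurableSpace α] {μ : Measure α}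
    {s : Finset ι} (c : ι → ℝ) {f : ι → α → ℝ}
    (hint : ∀ a ∈ s, ∀ b ∈ s, Integrable (fun x => f a x * f b x) μ)
    (horth : ∀ a ∈ s, ∀ b ∈ s, a ≠ b → ∫ x, f a x * f b x ∂μ = 0) :
    ∫ x, (∑ a ∈ s, c a * f a x) ^ 2 ∂μ = ∑ a ∈ s, c a ^ 2 * ∫ x, f a x * f a x ∂μ := by
  have hexpand : ∀ x, (∑ a ∈ s, c a * f a x) ^ 2
      = ∑ a ∈ s, ∑ b ∈ s, c a * c b * (f a x * f b x) := fun x => by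
    rw [sq, sum_mul_sum]
    exact sum_congr rfl fun a _ => sum_congr rfl fun b _ => by ring
  simp_rw [hexpand]
  rw [integral_finsetSum _ fun a ha => integrable_finsetSum _ fun b hb =>
    (hint a ha b hb).const_mul _]
  refine sum_congr rfl fun a ha => ?_
  rw [integral_finsetSum _ fun b hb => (hint a ha b hb).const_mul _,
    sum_eq_single_of_mem a ha fun b hb hba => by
      rw [integral_const_mul, horth a ha b hb hba.symm, mul_zero],
    integral_const_mul, sq]

lemma integral_pow_gaussianReal_of_odd {v : NNReal} {n : ℕ} (hn : Odd n) :
    ∫ x, x ^ n ∂gaussianReal 0 v = 0 := by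
  have h : ∫ x, x ^ n ∂gaussianReal 0 v = ∫ x, (-x) ^ n ∂gaussianReal 0 v := by
    conv_lhs => rw [← neg_zero, ← gaussianReal_map_neg, integral_map (by fun_prop) (by fun_prop)]
  simp only [hn.neg_pow, integral_neg] at h
  linarith

lemma integral_pow_gaussianReal_eq_iteratedDeriv (n : ℕ) :
    ∫ x, x ^ n ∂gaussianReal 0 1 = iteratedDeriv n (fun t => rexp (t ^ 2 / 2)) 0 := by
  have h := iteratedDeriv_mgf_zero (X := fun x => x) (μ := gaussianReal 0 1) (by simp) n
  simp only [mgf_fun_id_gaussianReal] at h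
  simpa using h.symm

lemma deriv_mul_exp_sq_div_two {f f' g : ℝ → ℝ} (hf : ∀ t, HasDerivAt f (f' t) t)
    (hg : ∀ t, f' t + t * f t = g t) :
    deriv (fun t => f t * rexp (t ^ 2 / 2)) = fun t => g t * rexp (t ^ 2 / 2) := by
  ext t
  have hexp : HasDerivAt (fun t => rexp (t ^ 2 / 2)) (t * rexp (t ^ 2 / 2)) t := by
    convert ((hasDerivAt_pow 2 t).div_const 2).exp using 1
    ring
  rw [((hf t).fun_mul hexp).deriv, ← hg]
  ring

lemma iteratedDeriv_two_exp_sq_div_two :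
    iteratedDeriv 2 (fun t => rexp (t ^ 2 / 2)) = fun t => (1 + t ^ 2) * rexp (t ^ 2 / 2) := by
  have h : deriv (fun t => rexp (t ^ 2 / 2)) = fun t => t * rexp (t ^ 2 / 2) := by
    simpa using deriv_mul_exp_sq_div_two (f := fun _ => 1) (g := fun t => t)
      (fun t => hasDerivAt_const t 1) (fun t => by ring)
  rw [iteratedDeriv_succ, iteratedDeriv_one, h]
  exact deriv_mul_exp_sq_div_two (fun t => hasDerivAt_id' t) (fun t => by ring)

lemma iteratedDeriv_four_exp_sq_div_two :
    iteratedDeriv 4 (fun t => rexp (t ^ 2 / 2))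
      = fun t => (3 + 6 * t ^ 2 + t ^ 4) * rexp (t ^ 2 / 2) := by
  rw [iteratedDeriv_succ, iteratedDeriv_succ, iteratedDeriv_two_exp_sq_div_two,
    deriv_mul_exp_sq_div_two (f := fun t => 1 + t ^ 2) (g := fun t => 3 * t + t ^ 3)
      (fun t => (hasDerivAt_const t 1).fun_add (hasDerivAt_pow 2 t)) (fun t => by ring)]
  exact deriv_mul_exp_sq_div_two
    (fun t => ((hasDerivAt_id' t).const_mul 3).fun_add (hasDerivAt_pow 3 t)) (fun t => by ring)

lemma integral_sq_gaussianReal_zero_one : ∫ x, x ^ 2 ∂gaussianReal 0 1 = 1 := by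
  simp [integral_pow_gaussianReal_eq_iteratedDeriv, iteratedDeriv_two_exp_sq_div_two]

lemma integral_pow_four_gaussianReal_zero_one : ∫ x, x ^ 4 ∂gaussianReal 0 1 = 3 := by
  simp [integral_pow_gaussianReal_eq_iteratedDeriv, iteratedDeriv_four_exp_sq_div_two]

section Monomials

variable {ι : Type*} [Fintype ι]

local notation "γ" => Measure.pi fun _ : ι => gaussianReal 0 1

lemma integrable_prod_pow_stdGaussian (e : ι → ℕ) : Integrable (fun u : ι → ℝ => ∏ c, u c ^ e c) γ :=
  Integrable.fintype_prod (f := fun c x => x ^ e c)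
    fun c => integrable_pow_of_mem_interior_integrableExpSet (by simp) (e c)

lemma integral_prod_pow_stdGaussian (e : ι → ℕ) :
    ∫ u, ∏ c, u c ^ e c ∂γ = ∏ c, ∫ x, x ^ e c ∂gaussianReal 0 1 :=
  integral_fintype_prod_eq_prod fun c x => x ^ e c

lemma integral_prod_pow_stdGaussian_of_odd {e : ι → ℕ} {c : ι} (hc : Odd (e c)) :
    ∫ u, ∏ c, u c ^ e c ∂γ = 0 := by
  rw [integral_prod_pow_stdGaussian]
  exact prod_eq_zero (mem_univ c) (integral_pow_gaussianReal_of_odd hc)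

variable [DecidableEq ι]

def cubicExponent (p : ι) (q : ι × ι) (c : ι) : ℕ :=
  (if c = q.1 then 1 else 0) + (if c = q.2 then 1 else 0) + (if c = p then 1 else 0)

lemma prod_pow_cubicExponent (u : ι → ℝ) (p : ι) (q : ι × ι) :
    ∏ c, u c ^ cubicExponent p q c = u q.1 * u q.2 * u p := by
  simp only [cubicExponent, pow_add, prod_mul_distrib, pow_ite, pow_one, pow_zero,
    prod_ite_eq', mem_univ, if_true]

lemma cubic_mul_cubic_eq_prod_pow (u : ι → ℝ) (p : ι) (a b : ι × ι) :
    u a.1 * u a.2 * u p * (u b.1 * u b.2 * u p)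
      = ∏ c, u c ^ (cubicExponent p a c + cubicExponent p b c) := by
  simp only [pow_add, prod_mul_distrib, prod_pow_cubicExponent]

lemma integrable_cubic_mul_cubic (p : ι) (a b : ι × ι) :
    Integrable (fun u => u a.1 * u a.2 * u p * (u b.1 * u b.2 * u p)) γ := by
  simp_rw [cubic_mul_cubic_eq_prod_pow]
  exact integrable_prod_pow_stdGaussian _

lemma integral_cubic_mul_self (p : ι) {a : ι × ι} (ha : a.1 ≠ a.2) :
    ∫ u, u a.1 * u a.2 * u p * (u a.1 * u a.2 * u p) ∂γ
      = if p = a.1 ∨ p = a.2 then 3 else 1 := by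
  have hmoment : ∀ c, ∫ x, x ^ (cubicExponent p a c + cubicExponent p a c) ∂gaussianReal 0 1
      = if p = c then (if p = a.1 ∨ p = a.2 then 3 else 1) else 1 := fun c => by
    by_cases h1 : c = a.1 <;> by_cases h2 : c = a.2 <;> by_cases h3 : p = c <;>
      simp_all [cubicExponent, integral_sq_gaussianReal_zero_one,
        integral_pow_four_gaussianReal_zero_one, eq_comm]
  simp_rw [cubic_mul_cubic_eq_prod_pow, integral_prod_pow_stdGaussian, hmoment]
  simp [prod_ite_eq]

end Monomials

section LowerPairs

variable {ι : Type*} [Fintype ι] [LinearOrder ι]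

local notation "γ" => Measure.pi fun _ : ι => gaussianReal 0 1

variable (ι) in
def lowerPairs : Finset (ι × ι) := univ.filter fun q => q.2 < q.1

@[simp]
lemma mem_lowerPairs {q : ι × ι} : q ∈ lowerPairs ι ↔ q.2 < q.1 := by
  simp [lowerPairs]

lemma sum_lowerPairs {M : Type*} [AddCommMonoid M] (h : ι × ι → M) :
    ∑ q ∈ lowerPairs ι, h q = ∑ i, ∑ j ∈ univ.filter (· < i), h (i, j) := by
  simp only [lowerPairs, sum_filter, Fintype.sum_prod_type]

lemma sum_ne_eq_sum_lowerPairs {M : Type*} [AddCommMonoid M] (F : ι → ι → M) :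
    ∑ i, ∑ j ∈ univ.filter (· ≠ i), F i j = ∑ q ∈ lowerPairs ι, (F q.1 q.2 + F q.2 q.1) := by
  have hswap : ∑ i, ∑ j ∈ univ.filter (· < i), F j i
      = ∑ i, ∑ j ∈ univ.filter (i < ·), F i j := by
    simp only [sum_filter]
    exact sum_comm
  rw [sum_lowerPairs, sum_congr rfl fun i _ => sum_add_distrib, sum_add_distrib, hswap,
    ← sum_add_distrib]
  refine sum_congr rfl fun i _ => ?_
  simp only [sum_filter, ← sum_add_distrib]
  refine sum_congr rfl fun j _ => ?_
  rcases lt_trichotomy j i with h | rfl | h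
  · simp [h, h.ne, h.not_gt]
  · simp
  · simp [h, h.ne', h.not_gt]

lemma exists_odd_cubicExponent_add (p : ι) {a b : ι × ι} (ha : a ∈ lowerPairs ι)
    (hb : b ∈ lowerPairs ι) (hab : a ≠ b) :
    ∃ c, Odd (cubicExponent p a c + cubicExponent p b c) := by
  rw [mem_lowerPairs] at ha hb
  suffices ∃ c, Odd ((if c = a.1 then 1 else 0) + (if c = a.2 then 1 else 0)
      + (if c = b.1 then 1 else 0) + (if c = b.2 then 1 else 0)) by
    obtain ⟨c, hc⟩ := this
    refine ⟨c, ?_⟩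
    convert hc.add_even (even_two_mul (if c = p then 1 else 0)) using 1
    simp only [cubicExponent]
    ring
  -- the larger of `a.1`, `b.1` occurs exactly once; if they agree, `a.2` does
  rcases lt_trichotomy a.1 b.1 with h | h | h
  · exact ⟨b.1, by simp [h.ne', (ha.trans h).ne', hb.ne']⟩
  · have h2 : a.2 ≠ b.2 := fun h2 => hab (Prod.ext h h2)
    exact ⟨a.2, by simp [ha.ne, h ▸ ha.ne, h2]⟩
  · exact ⟨a.1, by simp [h.ne', (hb.trans h).ne', ha.ne']⟩

lemma integral_cubic_mul_cubic_of_ne (p : ι) {a b : ι × ι} (ha : a ∈ lowerPairs ι)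
    (hb : b ∈ lowerPairs ι) (hab : a ≠ b) :
    ∫ u, u a.1 * u a.2 * u p * (u b.1 * u b.2 * u p) ∂γ = 0 := by
  obtain ⟨c, hc⟩ := exists_odd_cubicExponent_add p ha hb hab
  simp_rw [cubic_mul_cubic_eq_prod_pow]
  exact integral_prod_pow_stdGaussian_of_odd hc

lemma sum_lowerPairs_mul_ite (g : ι × ι → ℝ) (p : ι) :
    ∑ q ∈ lowerPairs ι, g q * (if p = q.1 ∨ p = q.2 then 3 else 1)
      = ∑ i, ∑ j ∈ univ.filter (· < i), g (i, j)
        + 2 * ∑ i ∈ univ.filter (p < ·), g (i, p) + 2 * ∑ j ∈ univ.filter (· < p), g (p, j) := by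
  have hsplit : ∀ q ∈ lowerPairs ι, g q * (if p = q.1 ∨ p = q.2 then 3 else 1)
      = g q + 2 * (if p = q.1 then g q else 0) + 2 * (if p = q.2 then g q else 0) := by
    intro q hq
    rw [mem_lowerPairs] at hq
    by_cases h1 : p = q.1 <;> by_cases h2 : p = q.2 <;> simp_all [hq.ne] <;> ring
  have hrow : ∑ i, ∑ j ∈ univ.filter (· < i), (if p = i then g (i, j) else 0)
      = ∑ j ∈ univ.filter (· < p), g (p, j) := by
    rw [sum_eq_single p (fun i _ hi => sum_eq_zero fun j _ => if_neg (Ne.symm hi)) (by simp)]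
    simp
  have hcol : ∑ i, ∑ j ∈ univ.filter (· < i), (if p = j then g (i, j) else 0)
      = ∑ i ∈ univ.filter (p < ·), g (i, p) := by
    simp [sum_ite_eq, sum_filter]
  rw [sum_congr rfl hsplit, sum_add_distrib, sum_add_distrib, ← mul_sum, ← mul_sum,
    sum_lowerPairs, sum_lowerPairs, sum_lowerPairs, hrow, hcol, add_right_comm]

end LowerPairs

theorem offdiag_second_moment_up_general {d : ℕ}
    (A : Matrix (Fin d) (Fin d) ℝ) (p : Fin d) :
    ∫ u, (∑ i, ∑ j ∈ Finset.univ.filter (fun j => j ≠ i),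
        A i j * u i * u j * u p) ^ 2 ∂(stdGaussianVec d)
      = (∑ i, ∑ j ∈ Finset.univ.filter (fun j => j < i), (A i j + A j i) ^ 2)
        + 2 * (∑ i ∈ Finset.univ.filter (fun i => p < i), (A i p + A p i) ^ 2)
        + 2 * (∑ j ∈ Finset.univ.filter (fun j => j < p), (A p j + A j p) ^ 2) := by
  have hpairs : ∀ u : Fin d → ℝ,
      ∑ i, ∑ j ∈ univ.filter (fun j => j ≠ i), A i j * u i * u j * u p
        = ∑ q ∈ lowerPairs (Fin d), (A q.1 q.2 + A q.2 q.1) * (u q.1 * u q.2 * u p) :=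
    fun u => by
      rw [sum_ne_eq_sum_lowerPairs]
      exact sum_congr rfl fun q _ => by ring
  simp_rw [hpairs]
  rw [stdGaussianVec, integral_sq_sum_eq_of_orthogonal _
      (fun a _ b _ => integrable_cubic_mul_cubic p a b)
      (fun a ha b hb hab => integral_cubic_mul_cubic_of_ne p ha hb hab),
    sum_congr rfl fun q hq => by rw [integral_cubic_mul_self p (mem_lowerPairs.1 hq).ne']]
  exact sum_lowerPairs_mul_ite (fun q => (A q.1 q.2 + A q.2 q.1) ^ 2) p

theorem offdiag_second_moment_up {d : ℕ} (hd : 1 ≤ d)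
    (A : Matrix (Fin d) (Fin d) ℝ) (p : Fin d) :
    ∫ u, (∑ i, ∑ j ∈ Finset.univ.filter (fun j => j ≠ i),
        A i j * u i * u j * u p) ^ 2 ∂(stdGaussianVec d)
      = (∑ i, ∑ j ∈ Finset.univ.filter (fun j => j < i), (A i j + A j i) ^ 2)
        + 2 * (∑ i ∈ Finset.univ.filter (fun i => p < i), (A i p + A p i) ^ 2)
        + 2 * (∑ j ∈ Finset.univ.filter (fun j => j < p), (A p j + A j p) ^ 2) :=
  offdiag_second_moment_up_general A p
end
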